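/- Let Φ be a superoperator on L(H) with dim H = d. Then ‖Φ‖_◇ ≤ d² ‖Φ‖_{2→2} and ‖Φ‖_{2→2} ≤ √d · ‖Φ‖_◇. -/

import Mathlib

open scoped ComplexOrder

/-- The trace norm (Schatten 1-norm) of a complex matrix: the trace of `√(AᴴA)`. -/
noncomputable def traceNorm {n : Type*} [Fintype n] [DecidableEq n]
    (A : Matrix n n ℂ) : ℝ :=
  (((Matrix.posSemidef_conjTranspose_mul_self A).1.eigenvectorUnitary : Matrix n n ℂ) *
      Matrix.diagonal (((↑) : ℝ → ℂ) ∘ Real.sqrt ∘ (Matrix.posSemidef_conjTranspose_mul_self A).1.eigenvalues) *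
      (star (Matrix.posSemidef_conjTranspose_mul_self A).1.eigenvectorUnitary : Matrix n n ℂ)).trace.re

/-- The Frobenius (Hilbert–Schmidt) norm of a complex matrix. -/
noncomputable def frobNorm {n : Type*} [Fintype n] (A : Matrix n n ℂ) : ℝ :=
  Real.sqrt (∑ i, ∑ j, ‖A i j‖ ^ 2)

/-- The extension `Φ ⊗ id` of a superoperator `Φ` on `L(ℂ^n)` to `L(ℂ^n ⊗ ℂ^m)`. -/
noncomputable def extTensor {n m : Type*} [Fintype n] [Fintype m]
    (Φ : Matrix n n ℂ →ₗ[ℂ] Matrix n n ℂ) (X : Matrix (n × m) (n × m) ℂ) :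
    Matrix (n × m) (n × m) ℂ :=
  Matrix.of fun p q => Φ (Matrix.of fun i j => X (i, p.2) (j, q.2)) p.1 q.1

/-- The diamond norm `‖Φ‖_◇ = ‖Φ ⊗ id‖_{1→1}` of a superoperator on `L(ℂ^n)`. -/
noncomputable def diamondNorm {n : Type*} [Fintype n] [DecidableEq n]
    (Φ : Matrix n n ℂ →ₗ[ℂ] Matrix n n ℂ) : ℝ :=
  ⨆ X : {X : Matrix (n × n) (n × n) ℂ // traceNorm X ≤ 1},
    traceNorm (extTensor Φ X.1)

/-- The `2→2` norm of a superoperator: operator norm w.r.t. the Frobenius norm. -/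
noncomputable def norm22 {n : Type*} [Fintype n]
    (Φ : Matrix n n ℂ →ₗ[ℂ] Matrix n n ℂ) : ℝ :=
  ⨆ X : {X : Matrix n n ℂ // frobNorm X ≤ 1}, frobNorm (Φ X.1)

/-! Both inequalities compare the trace norm and the Frobenius norm through the singular values
`σᵢ` of a `d × d` matrix: `‖A‖₂ = √(∑ σᵢ²) ≤ ∑ σᵢ = ‖A‖₁ ≤ √d ‖A‖₂`.

Since `Φ ⊗ id` acts on each block `X_{bc}` of a matrix on `ℂᵈ ⊗ ℂᵈ` separately, it is bounded by
`‖Φ‖_{2→2}` in Frobenius norm; passing to trace norms on the `d²`-dimensional space costs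
`√(d²) = d ≤ d²`.

Conversely `X ⊗ E_{aa}` has the trace norm of `X` and is mapped by `Φ ⊗ id` to `Φ X ⊗ E_{aa}`, so
`‖Φ X‖₂ ≤ ‖Φ X‖₁ ≤ ‖Φ‖_◇ ‖X‖₁ ≤ √d ‖Φ‖_◇ ‖X‖₂`. -/

open Matrix
open scoped MatrixOrder Kronecker

section TraceNorm

variable {n : Type*} [Fintype n]

lemma frobNorm_nonneg (A : Matrix n n ℂ) : 0 ≤ frobNorm A :=
  Real.sqrt_nonneg _

lemma frobNorm_sq (A : Matrix n n ℂ) : frobNorm A ^ 2 = ∑ i, ∑ j, ‖A i j‖ ^ 2 :=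
  Real.sq_sqrt (by positivity)

variable [DecidableEq n]

lemma traceNorm_eq_sum_sqrt_eigenvalues (A : Matrix n n ℂ) :
    traceNorm A = ∑ i, √((posSemidef_conjTranspose_mul_self A).1.eigenvalues i) := by
  unfold traceNorm
  rw [trace_mul_cycle, Unitary.coe_star_mul_self, one_mul, trace_diagonal, Complex.re_sum]
  simp

lemma frobNorm_sq_eq_sum_eigenvalues (A : Matrix n n ℂ) :
    frobNorm A ^ 2 = ∑ i, (posSemidef_conjTranspose_mul_self A).1.eigenvalues i := by
  have htr : ((Aᴴ * A).trace).re = ∑ i, ∑ j, ‖A i j‖ ^ 2 := by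
    simp only [trace, diag, mul_apply, conjTranspose_apply, Complex.re_sum]
    rw [Finset.sum_comm]
    simp [Complex.mul_re, Complex.sq_norm, Complex.normSq_apply]
  rw [frobNorm_sq, ← htr, (posSemidef_conjTranspose_mul_self A).1.trace_eq_sum_eigenvalues,
    Complex.re_sum]
  simp

lemma traceNorm_nonneg (A : Matrix n n ℂ) : 0 ≤ traceNorm A := by
  rw [traceNorm_eq_sum_sqrt_eigenvalues]
  positivity

lemma frobNorm_sq_eq_sum_sq_sqrt_eigenvalues (A : Matrix n n ℂ) :
    frobNorm A ^ 2 = ∑ i, √((posSemidef_conjTranspose_mul_self A).1.eigenvalues i) ^ 2 := by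
  simp only [frobNorm_sq_eq_sum_eigenvalues,
    Real.sq_sqrt ((posSemidef_conjTranspose_mul_self A).eigenvalues_nonneg _)]

lemma frobNorm_le_traceNorm (A : Matrix n n ℂ) : frobNorm A ≤ traceNorm A := by
  refine (sq_le_sq₀ (frobNorm_nonneg A) (traceNorm_nonneg A)).mp ?_
  rw [frobNorm_sq_eq_sum_sq_sqrt_eigenvalues, traceNorm_eq_sum_sqrt_eigenvalues]
  exact Finset.sum_sq_le_sq_sum_of_nonneg fun i _ ↦ Real.sqrt_nonneg _

lemma traceNorm_le_sqrt_card_mul_frobNorm (A : Matrix n n ℂ) :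
    traceNorm A ≤ √(Fintype.card n) * frobNorm A := by
  refine (sq_le_sq₀ (traceNorm_nonneg A)
    (mul_nonneg (Real.sqrt_nonneg _) (frobNorm_nonneg A))).mp ?_
  rw [mul_pow, Real.sq_sqrt (Nat.cast_nonneg _), frobNorm_sq_eq_sum_sq_sqrt_eigenvalues,
    traceNorm_eq_sum_sqrt_eigenvalues]
  exact sq_sum_le_card_mul_sum_sq

lemma traceNorm_eq_re_trace_abs (A : Matrix n n ℂ) : traceNorm A = (CFC.abs A).trace.re := by
  have hA := posSemidef_conjTranspose_mul_self A
  rw [CFC.abs, star_eq_conjTranspose, CFC.sqrt_eq_cfc, cfc_nnreal_eq_real _ (Aᴴ * A), hA.1.cfc_eq]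
  unfold traceNorm IsHermitian.cfc
  rw [Unitary.conjStarAlgAut_apply]
  congr 5
  funext i
  simp [max_eq_left (hA.eigenvalues_nonneg i)]

end TraceNorm

section Kronecker

variable {n m : Type*} [Fintype n] [DecidableEq n] [Fintype m] [DecidableEq m]

lemma abs_kronecker (A : Matrix n n ℂ) (B : Matrix m m ℂ) :
    CFC.abs (A ⊗ₖ B) = CFC.abs A ⊗ₖ CFC.abs B := by
  refine CFC.sqrt_unique ?_
    ((CFC.abs_nonneg A).posSemidef.kronecker (CFC.abs_nonneg B).posSemidef).nonneg
  rw [← mul_kronecker_mul, CFC.abs_mul_abs, CFC.abs_mul_abs]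
  simp only [star_eq_conjTranspose, conjTranspose_kronecker, mul_kronecker_mul]

lemma im_trace_abs (A : Matrix n n ℂ) : (CFC.abs A).trace.im = 0 :=
  ((Complex.le_def.mp (CFC.abs_nonneg A).posSemidef.trace_nonneg).2).symm

lemma traceNorm_kronecker (A : Matrix n n ℂ) (B : Matrix m m ℂ) :
    traceNorm (A ⊗ₖ B) = traceNorm A * traceNorm B := by
  simp only [traceNorm_eq_re_trace_abs, abs_kronecker, trace_kronecker, Complex.mul_re,
    im_trace_abs, mul_zero, sub_zero]

lemma traceNorm_eq_re_trace_of_posSemidef {A : Matrix n n ℂ} (hA : A.PosSemidef) :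
    traceNorm A = A.trace.re := by
  rw [traceNorm_eq_re_trace_abs, CFC.abs_of_nonneg A hA.nonneg]

lemma traceNorm_single_self (a : n) {r : ℝ} (hr : 0 ≤ r) :
    traceNorm (single a a (r : ℂ)) = r := by
  have hpsd : (single a a (r : ℂ)).PosSemidef := by
    rw [← diagonal_single, posSemidef_diagonal_iff]
    intro i
    rcases eq_or_ne i a with rfl | hi
    · simpa using hr
    · simp [hi]
  rw [traceNorm_eq_re_trace_of_posSemidef hpsd, trace_single_eq_same, Complex.ofReal_re]

end Kronecker

section Frobenius

attribute [local instance] Matrix.frobeniusNormedAddCommGroup Matrix.frobeniusNormedSpace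

variable {n : Type*} [Fintype n]

lemma frobNorm_eq_norm (A : Matrix n n ℂ) : frobNorm A = ‖A‖ := by
  rw [frobNorm, frobenius_norm_def, Real.sqrt_eq_rpow]
  norm_num [Real.rpow_natCast]

lemma frobNorm_eq_zero {A : Matrix n n ℂ} : frobNorm A = 0 ↔ A = 0 := by
  rw [frobNorm_eq_norm, norm_eq_zero]

lemma frobNorm_smul (c : ℂ) (A : Matrix n n ℂ) : frobNorm (c • A) = ‖c‖ * frobNorm A := by
  rw [frobNorm_eq_norm, frobNorm_eq_norm, norm_smul]

lemma bddAbove_range_frobNorm_map (Φ : Matrix n n ℂ →ₗ[ℂ] Matrix n n ℂ) :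
    BddAbove (Set.range fun X : {X : Matrix n n ℂ // frobNorm X ≤ 1} ↦ frobNorm (Φ X.1)) := by
  obtain ⟨K, hK⟩ := Φ.toAffineMap.lipschitzWith_of_finiteDimensional
  refine ⟨K, ?_⟩
  rintro _ ⟨⟨X, hX⟩, rfl⟩
  have hdist := hK.dist_le_mul X 0
  simp only [LinearMap.coe_toAffineMap, map_zero, dist_zero_right, ← frobNorm_eq_norm] at hdist
  exact hdist.trans (mul_le_of_le_one_right K.2 hX)

end Frobenius

section Superoperator

variable {n m : Type*} [Fintype n] [Fintype m] (Φ : Matrix n n ℂ →ₗ[ℂ] Matrix n n ℂ)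

lemma extTensor_kronecker (A : Matrix n n ℂ) (B : Matrix m m ℂ) :
    extTensor Φ (A ⊗ₖ B) = Φ A ⊗ₖ B := by
  ext ⟨i, b⟩ ⟨j, c⟩
  have hblock : (of fun i' j' ↦ A i' j' * B b c) = B b c • A := by
    ext i' j'
    simp [mul_comm]
  simp only [extTensor, of_apply, kroneckerMap_apply, hblock, map_smul, Matrix.smul_apply,
    smul_eq_mul, mul_comm]

lemma norm22_nonneg : 0 ≤ norm22 Φ :=
  Real.iSup_nonneg fun _ ↦ frobNorm_nonneg _

lemma frobNorm_map_le_norm22_mul (X : Matrix n n ℂ) : frobNorm (Φ X) ≤ norm22 Φ * frobNorm X := by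
  rcases eq_or_ne X 0 with rfl | hX
  · simp [frobNorm_eq_zero.mpr rfl]
  have hpos : 0 < frobNorm X := (frobNorm_nonneg X).lt_of_ne' (frobNorm_eq_zero.not.mpr hX)
  have hnorm : ‖((frobNorm X)⁻¹ : ℂ)‖ = (frobNorm X)⁻¹ := by
    rw [norm_inv, Complex.norm_real, Real.norm_of_nonneg hpos.le]
  have hunit : frobNorm (((frobNorm X)⁻¹ : ℂ) • X) ≤ 1 := by
    rw [frobNorm_smul, hnorm, inv_mul_cancel₀ hpos.ne']
  have hle := le_ciSup (bddAbove_range_frobNorm_map Φ) ⟨_, hunit⟩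
  rw [map_smul, frobNorm_smul, hnorm, inv_mul_le_iff₀ hpos] at hle
  rwa [mul_comm]

lemma frobNorm_sq_eq_sum_blocks (X : Matrix (n × m) (n × m) ℂ) :
    frobNorm X ^ 2 = ∑ b, ∑ c, frobNorm (of fun i j ↦ X (i, b) (j, c)) ^ 2 := by
  simp only [frobNorm_sq, of_apply, Fintype.sum_prod_type]
  rw [Finset.sum_comm]
  exact Finset.sum_congr rfl fun b _ ↦
    (Finset.sum_congr rfl fun i _ ↦ Finset.sum_comm).trans Finset.sum_comm

lemma frobNorm_extTensor_le_norm22_mul (X : Matrix (n × m) (n × m) ℂ) :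
    frobNorm (extTensor Φ X) ≤ norm22 Φ * frobNorm X := by
  refine (sq_le_sq₀ (frobNorm_nonneg _)
    (mul_nonneg (norm22_nonneg Φ) (frobNorm_nonneg X))).mp ?_
  rw [frobNorm_sq_eq_sum_blocks, mul_pow, frobNorm_sq_eq_sum_blocks, Finset.mul_sum]
  refine Finset.sum_le_sum fun b _ ↦ ?_
  rw [Finset.mul_sum]
  refine Finset.sum_le_sum fun c _ ↦ ?_
  have hblock : (of fun i j ↦ extTensor Φ X (i, b) (j, c)) = Φ (of fun i j ↦ X (i, b) (j, c)) :=
    rfl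
  rw [hblock, ← mul_pow]
  exact pow_le_pow_left₀ (frobNorm_nonneg _) (frobNorm_map_le_norm22_mul Φ _) 2

end Superoperator

section Diamond

variable {n : Type*} [Fintype n] [DecidableEq n] (Φ : Matrix n n ℂ →ₗ[ℂ] Matrix n n ℂ)

lemma traceNorm_extTensor_le_sqrt_card_mul {m : Type*} [Fintype m] [DecidableEq m]
    (X : Matrix (n × m) (n × m) ℂ) :
    traceNorm (extTensor Φ X) ≤ √(Fintype.card (n × m)) * (norm22 Φ * traceNorm X) :=
  calc traceNorm (extTensor Φ X)
      ≤ √(Fintype.card (n × m)) * frobNorm (extTensor Φ X) :=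
        traceNorm_le_sqrt_card_mul_frobNorm _
    _ ≤ √(Fintype.card (n × m)) * (norm22 Φ * traceNorm X) := by
        gcongr
        exact (frobNorm_extTensor_le_norm22_mul Φ X).trans
          (mul_le_mul_of_nonneg_left (frobNorm_le_traceNorm X) (norm22_nonneg Φ))

lemma traceNorm_extTensor_le_card_mul_norm22 {X : Matrix (n × n) (n × n) ℂ}
    (hX : traceNorm X ≤ 1) :
    traceNorm (extTensor Φ X) ≤ Fintype.card n * norm22 Φ := by
  have hcard : √(Fintype.card (n × n) : ℝ) = Fintype.card n := by
    rw [Fintype.card_prod, Nat.cast_mul, Real.sqrt_mul_self (Nat.cast_nonneg _)]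
  calc traceNorm (extTensor Φ X) ≤ Fintype.card n * (norm22 Φ * traceNorm X) :=
        hcard ▸ traceNorm_extTensor_le_sqrt_card_mul Φ X
    _ ≤ Fintype.card n * norm22 Φ := by
        gcongr
        exact mul_le_of_le_one_right (norm22_nonneg Φ) hX

lemma diamondNorm_nonneg : 0 ≤ diamondNorm Φ :=
  Real.iSup_nonneg fun _ ↦ traceNorm_nonneg _

lemma diamondNorm_le_card_mul_norm22 : diamondNorm Φ ≤ Fintype.card n * norm22 Φ := by
  have : Nonempty {X : Matrix (n × n) (n × n) ℂ // traceNorm X ≤ 1} :=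
    ⟨⟨0, by simp [traceNorm_eq_re_trace_abs]⟩⟩
  exact ciSup_le fun X ↦ traceNorm_extTensor_le_card_mul_norm22 Φ X.2

lemma traceNorm_map_le_diamondNorm [Nonempty n] {X : Matrix n n ℂ} (hX : traceNorm X ≤ 1) :
    traceNorm (Φ X) ≤ diamondNorm Φ := by
  obtain ⟨a⟩ := ‹Nonempty n›
  have hbdd : BddAbove (Set.range fun X : {X : Matrix (n × n) (n × n) ℂ // traceNorm X ≤ 1} ↦
      traceNorm (extTensor Φ X.1)) :=
    ⟨_, Set.forall_mem_range.mpr fun X ↦ traceNorm_extTensor_le_card_mul_norm22 Φ X.2⟩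
  have hE : traceNorm (single a a (1 : ℂ)) = 1 := by
    exact_mod_cast traceNorm_single_self a zero_le_one
  have hXE : traceNorm (X ⊗ₖ single a a 1) ≤ 1 := by
    rwa [traceNorm_kronecker, hE, mul_one]
  have hle := le_ciSup hbdd ⟨_, hXE⟩
  rwa [extTensor_kronecker, traceNorm_kronecker, hE, mul_one] at hle

lemma norm22_le_sqrt_card_mul_diamondNorm :
    norm22 Φ ≤ √(Fintype.card n) * diamondNorm Φ := by
  rcases isEmpty_or_nonempty n with _ | _
  · simp [norm22, frobNorm]
  have hd : 0 < √(Fintype.card n : ℝ) := Real.sqrt_pos.mpr (by exact_mod_cast Fintype.card_pos)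
  refine Real.iSup_le (fun ⟨X, hX⟩ ↦ ?_) (mul_nonneg hd.le (diamondNorm_nonneg Φ))
  set c : ℂ := (((√(Fintype.card n : ℝ))⁻¹ : ℝ) : ℂ)
  have hc : ‖c‖ = (√(Fintype.card n : ℝ))⁻¹ := by
    rw [Complex.norm_real, Real.norm_of_nonneg (inv_nonneg.mpr hd.le)]
  have hcX : traceNorm (c • X) ≤ 1 :=
    calc traceNorm (c • X) ≤ √(Fintype.card n) * frobNorm (c • X) :=
          traceNorm_le_sqrt_card_mul_frobNorm _
      _ = frobNorm X := by rw [frobNorm_smul, hc, mul_inv_cancel_left₀ hd.ne']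
      _ ≤ 1 := hX
  have hle : frobNorm (Φ (c • X)) ≤ diamondNorm Φ :=
    (frobNorm_le_traceNorm _).trans (traceNorm_map_le_diamondNorm Φ hcX)
  rwa [map_smul, frobNorm_smul, hc, inv_mul_le_iff₀ hd] at hle

end Diamond

/-- For a superoperator `Φ` on `L(H)` with `dim H = d`:
`‖Φ‖_◇ ≤ d²·‖Φ‖_{2→2}` and `‖Φ‖_{2→2} ≤ √d·‖Φ‖_◇`. -/
theorem stmt_12 {n : Type*} [Fintype n] [DecidableEq n]
    (Φ : Matrix n n ℂ →ₗ[ℂ] Matrix n n ℂ) :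
    diamondNorm Φ ≤ (Fintype.card n : ℝ) ^ 2 * norm22 Φ ∧
      norm22 Φ ≤ Real.sqrt (Fintype.card n) * diamondNorm Φ := by
  refine ⟨(diamondNorm_le_card_mul_norm22 Φ).trans ?_, norm22_le_sqrt_card_mul_diamondNorm Φ⟩
  gcongr
  · exact norm22_nonneg Φ
  · exact_mod_cast Nat.le_self_pow two_ne_zero _
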